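/- arXiv:1912.06067 — 6 statements merged into one kernel-verified Lean document; each statement's English description precedes it below -/
import Mathlib

section
/- For all integers m ≥ 0, the q-deformed beta-binomial weights sum to one: ∑_{j=0}^{m} φ_{q,μ,ν}(j|m) = 1, where φ_{q,μ,ν}(j|m) = μ^j · ((ν/μ;q)_j (μ;q)_{m-j})/(ν;q)_m · (q;q)_m/((q;q)_j (q;q)_{m-j}). -/
/-!
Since `μ ^ j (ν/μ;q)_j = ∏_{i<j} (μ - q^i ν)`, the weight `φ(j|m)` is
`[m choose j]_q ∏_{i<j} (μ - q^i ν) (μ;q)_{m-j} / (ν;q)_m`, and the numerators sum to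
`(ν;q)_m` for all `q`, `μ`, `ν` (a q-Chu–Vandermonde identity). By induction on `m`: the
q-Pascal rule splits the sum for `m + 1` into two sums over `j + k = m`, whose terms combine
through `(1 - q^k μ) + q^k (μ - q^j ν) = 1 - q^(j+k) ν`.
-/

open Finset

/-- The q-Pochhammer symbol `(x;q)_k = ∏_{i=0}^{k-1} (1 - q^i x)`. -/
noncomputable def qPoch (q x : ℝ) (k : ℕ) : ℝ := ∏ i ∈ Finset.range k, (1 - q ^ i * x)

/-- The q-deformed beta-binomial weight `φ_{q,μ,ν}(j|m)`. -/
noncomputable def qHahnPhi (q μ ν : ℝ) (j m : ℕ) : ℝ :=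
  μ ^ j * (qPoch q (ν / μ) j * qPoch q μ (m - j)) / qPoch q ν m *
    (qPoch q q m / (qPoch q q j * qPoch q q (m - j)))

/-- The Gaussian binomial coefficient `[j + k choose j]_q`, indexed by the two parts `j`, `k`. -/
def gaussBinom (q : ℝ) : ℕ → ℕ → ℝ
  | 0, _ => 1
  | _ + 1, 0 => 1
  | j + 1, k + 1 => q ^ (k + 1) * gaussBinom q j (k + 1) + gaussBinom q (j + 1) k

lemma qPoch_succ (q x : ℝ) (k : ℕ) : qPoch q x (k + 1) = qPoch q x k * (1 - q ^ k * x) :=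
  prod_range_succ _ _

lemma qPoch_self_ne_zero {q : ℝ} (hq : |q| < 1) (k : ℕ) : qPoch q q k ≠ 0 := by
  refine prod_ne_zero_iff.mpr fun i _ h => ?_
  have hpow : |q| ^ (i + 1) = 1 := by rw [← abs_pow, pow_succ, ← sub_eq_zero.mp h, abs_one]
  exact (pow_lt_one₀ (abs_nonneg q) hq i.succ_ne_zero).ne hpow

lemma pow_mul_qPoch_div_eq_prod {μ : ℝ} (hμ : μ ≠ 0) (q ν : ℝ) (j : ℕ) :
    μ ^ j * qPoch q (ν / μ) j = ∏ i ∈ range j, (μ - q ^ i * ν) := by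
  rw [qPoch, pow_eq_prod_const, ← prod_mul_distrib]
  refine prod_congr rfl fun i _ => ?_
  field_simp

lemma gaussBinom_mul_qPoch_mul_qPoch (q : ℝ) (j k : ℕ) :
    gaussBinom q j k * qPoch q q j * qPoch q q k = qPoch q q (j + k) := by
  induction j generalizing k with
  | zero => simp [gaussBinom, qPoch]
  | succ j ihj =>
    induction k with
    | zero => simp [gaussBinom, qPoch]
    | succ k ihk =>
      have hj := ihj (k + 1)
      rw [gaussBinom, show j + 1 + (k + 1) = j + k + 1 + 1 by ring]
      rw [show j + (k + 1) = j + k + 1 by ring, qPoch_succ q q k] at hj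
      rw [show j + 1 + k = j + k + 1 by ring, qPoch_succ q q j] at ihk
      rw [qPoch_succ q q (j + k + 1), qPoch_succ q q j, qPoch_succ q q k, pow_succ q (j + k),
        pow_add]
      linear_combination (q ^ (k + 1) * (1 - q ^ j * q)) * hj + (1 - q ^ k * q) * ihk

lemma gaussBinom_eq_div {q : ℝ} (hq : |q| < 1) (j k : ℕ) :
    gaussBinom q j k = qPoch q q (j + k) / (qPoch q q j * qPoch q q k) := by
  rw [eq_div_iff (mul_ne_zero (qPoch_self_ne_zero hq j) (qPoch_self_ne_zero hq k)),
    ← mul_assoc, gaussBinom_mul_qPoch_mul_qPoch]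

lemma sum_antidiagonal_succ_gaussBinom_mul (q : ℝ) (m : ℕ) (f : ℕ × ℕ → ℝ) :
    ∑ p ∈ antidiagonal (m + 1), gaussBinom q p.1 p.2 * f p =
      ∑ p ∈ antidiagonal m, (q ^ p.2 * gaussBinom q p.1 p.2 * f (p.1 + 1, p.2) +
        gaussBinom q p.1 p.2 * f (p.1, p.2 + 1)) := by
  rw [Nat.sum_antidiagonal_succ, sum_add_distrib]
  cases m with
  | zero => simp [gaussBinom, add_comm]
  | succ n =>
    rw [Nat.sum_antidiagonal_succ', Nat.sum_antidiagonal_succ', Nat.sum_antidiagonal_succ (n := n)]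
    simp only [gaussBinom, pow_zero, one_mul, add_mul, sum_add_distrib]
    ring

theorem sum_antidiagonal_gaussBinom_mul_qPoch (q μ ν : ℝ) (m : ℕ) :
    ∑ p ∈ antidiagonal m,
        gaussBinom q p.1 p.2 * (∏ i ∈ range p.1, (μ - q ^ i * ν)) * qPoch q μ p.2 =
      qPoch q ν m := by
  induction m with
  | zero => simp [gaussBinom, qPoch]
  | succ m ih =>
    simp_rw [mul_assoc, sum_antidiagonal_succ_gaussBinom_mul, qPoch_succ, prod_range_succ, ← ih,
      sum_mul]
    refine sum_congr rfl fun p hp => ?_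
    rw [← mem_antidiagonal.mp hp, pow_add]
    ring

/-- The q-deformed beta-binomial weights sum to one. -/
theorem qHahnPhi_sum_eq_one (q μ ν : ℝ) (hq0 : 0 < q) (hq1 : q < 1)
    (hμ : μ ≠ 0) (m : ℕ) (hν : qPoch q ν m ≠ 0) :
    ∑ j ∈ Finset.range (m + 1), qHahnPhi q μ ν j m = 1 := by
  have hq : |q| < 1 := abs_lt.mpr ⟨by linarith, hq1⟩
  have hterm : ∀ j ∈ range (m + 1), qHahnPhi q μ ν j m =
      gaussBinom q j (m - j) * (∏ i ∈ range j, (μ - q ^ i * ν)) * qPoch q μ (m - j) /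
        qPoch q ν m := by
    intro j hj
    rw [qHahnPhi, ← pow_mul_qPoch_div_eq_prod hμ, gaussBinom_eq_div hq,
      Nat.add_sub_cancel' (Nat.lt_succ_iff.mp (mem_range.mp hj))]
    ring
  rw [sum_congr rfl hterm, ← sum_div,
    ← Nat.sum_antidiagonal_eq_sum_range_succ (fun j k => gaussBinom q j k *
      (∏ i ∈ range j, (μ - q ^ i * ν)) * qPoch q μ k),
    sum_antidiagonal_gaussBinom_mul_qPoch, div_self hν]
end

section
/- If 0 < q < 1, 0 ≤ μ ≤ 1 and ν ≤ μ with ν ≥ 0, then for all 0 ≤ j ≤ m the q-deformed beta-binomial weight φ_{q,μ,ν}(j|m) is nonnegative. -/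
open Finset

lemma pow_mul_le_one {q x : ℝ} (hq0 : 0 ≤ q) (hq1 : q ≤ 1) (hx : x ≤ 1) (i : ℕ) :
    q ^ i * x ≤ 1 := by
  rcases le_total 0 x with hx0 | hx0
  · exact mul_le_one₀ (pow_le_one₀ hq0 hq1) hx0 hx
  · exact (mul_nonpos_of_nonneg_of_nonpos (pow_nonneg hq0 i) hx0).trans zero_le_one

lemma qPoch_nonneg {q x : ℝ} (hq0 : 0 ≤ q) (hq1 : q ≤ 1) (hx : x ≤ 1) (k : ℕ) :
    0 ≤ qPoch q x k :=
  prod_nonneg fun i _ => sub_nonneg.mpr (pow_mul_le_one hq0 hq1 hx i)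

theorem qHahnPhi_nonneg_general (q μ ν : ℝ) (hq0 : 0 < q) (hq1 : q < 1)
    (hμ0 : 0 ≤ μ) (hμ1 : μ ≤ 1) (hνμ : ν ≤ μ)
    (j m : ℕ) :
    0 ≤ qHahnPhi q μ ν j m := by
  have poch_nonneg {x : ℝ} (hx : x ≤ 1) (k : ℕ) : 0 ≤ qPoch q x k :=
    qPoch_nonneg hq0.le hq1.le hx k
  have := poch_nonneg (div_le_one_of_le₀ hνμ hμ0) j
  have := poch_nonneg hμ1 (m - j)
  have := poch_nonneg (hνμ.trans hμ1) m
  have := poch_nonneg hq1.le m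
  have := poch_nonneg hq1.le j
  have := poch_nonneg hq1.le (m - j)
  unfold qHahnPhi
  positivity

/-- If `0 < q < 1`, `0 ≤ μ ≤ 1` and `0 ≤ ν ≤ μ`, the q-deformed beta-binomial weights
`φ_{q,μ,ν}(j|m)` are nonnegative for all `0 ≤ j ≤ m`. -/
theorem qHahnPhi_nonneg (q μ ν : ℝ) (hq0 : 0 < q) (hq1 : q < 1)
    (hμ0 : 0 ≤ μ) (hμ1 : μ ≤ 1) (hν0 : 0 ≤ ν) (hνμ : ν ≤ μ)
    (j m : ℕ) (hjm : j ≤ m) :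
    0 ≤ qHahnPhi q μ ν j m :=
  qHahnPhi_nonneg_general q μ ν hq0 hq1 hμ0 hμ1 hνμ j m
end

section
/- The q-deformed beta-binomial weights satisfy the symmetry property: for all nonnegative integers m and y, ∑_{j=0}^{m} q^{jy} φ_{q,μ,ν}(j|m) = ∑_{k=0}^{y} q^{km} φ_{q,μ,ν}(k|y). -/
open Finset

/-!
Expand `x ^ y` in the q-Newton basis `∏_{i<k} (x - q^i)`; the coefficients are the Gaussian
binomials `[y, k]_q`. At `x = q^j` the basis element vanishes for `j < k`, and the shift
`j = k + l` turns the `k`-th moment of `φ(·|m)` against it into a q-Chu–Vandermonde sum, giving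
`[m, k]_q · C_k` with `C_k` independent of `m`. Hence both sides equal
`∑_k [y, k]_q [m, k]_q C_k`.
-/

lemma qPoch_zero (q x : ℝ) : qPoch q x 0 = 1 := prod_range_zero _

lemma qPoch_add (q x : ℝ) (a b : ℕ) :
    qPoch q x (a + b) = qPoch q x a * qPoch q (q ^ a * x) b := by
  rw [qPoch, prod_range_add]
  congr 1
  exact prod_congr rfl fun i _ => by rw [pow_add]; ring

lemma qPoch_self_pos {q : ℝ} (hq0 : 0 < q) (hq1 : q < 1) (n : ℕ) : 0 < qPoch q q n :=
  prod_pos fun i _ => by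
    have : q ^ i * q < 1 := mul_lt_one_of_nonneg_of_lt_one_right
      (pow_le_one₀ hq0.le hq1.le) hq0.le hq1
    linarith

lemma one_sub_pow_succ_ne_zero {q : ℝ} (hq : ∀ n, qPoch q q n ≠ 0) (k : ℕ) :
    1 - q ^ (k + 1) ≠ 0 := by
  have h := hq (k + 1)
  rw [qPoch_succ, ← pow_succ] at h
  exact right_ne_zero_of_mul h

-- Set to `0` for `k > n`, so that Pascal's rules hold for all `k` and sums may run past `n`.
noncomputable def qBinom (q : ℝ) (n k : ℕ) : ℝ :=
  if k ≤ n then qPoch q q n / (qPoch q q k * qPoch q q (n - k)) else 0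

noncomputable def qNewton (q x : ℝ) (k : ℕ) : ℝ := ∏ i ∈ range k, (x - q ^ i)

section

variable {q : ℝ}

lemma qBinom_of_lt {n k : ℕ} (h : n < k) : qBinom q n k = 0 := if_neg (by omega)

lemma qBinom_zero_right (hq : ∀ n, qPoch q q n ≠ 0) (n : ℕ) : qBinom q n 0 = 1 := by
  simp [qBinom, qPoch_zero, hq]

lemma qBinom_self (hq : ∀ n, qPoch q q n ≠ 0) (n : ℕ) : qBinom q n n = 1 := by
  simp [qBinom, qPoch_zero, hq]

lemma qBinom_succ_succ (hq : ∀ n, qPoch q q n ≠ 0) (n k : ℕ) :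
    qBinom q (n + 1) (k + 1) = qBinom q n k + q ^ (k + 1) * qBinom q n (k + 1) := by
  rcases lt_trichotomy k n with h | rfl | h
  · obtain ⟨b, rfl⟩ : ∃ b, n = k + 1 + b := ⟨n - (k + 1), by omega⟩
    rw [qBinom, qBinom, qBinom, if_pos (by omega), if_pos (by omega), if_pos (by omega)]
    simp only [show k + 1 + b + 1 - (k + 1) = b + 1 by omega, show k + 1 + b - k = b + 1 by omega,
      show k + 1 + b - (k + 1) = b by omega, qPoch_succ, ← pow_succ]
    have := hq (k + 1 + b); have := hq k; have := hq b
    have := one_sub_pow_succ_ne_zero hq k; have := one_sub_pow_succ_ne_zero hq b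
    field_simp
    ring
  · simp [qBinom_self hq, qBinom_of_lt]
  · simp [qBinom_of_lt, h, Nat.lt_succ_of_lt h]

lemma qBinom_succ_right_mul (hq : ∀ n, qPoch q q n ≠ 0) (n k : ℕ) :
    qBinom q n (k + 1) * (1 - q ^ (k + 1)) = qBinom q n k * (1 - q ^ (n - k)) := by
  rcases lt_trichotomy k n with h | rfl | h
  · obtain ⟨b, rfl⟩ : ∃ b, n = k + 1 + b := ⟨n - (k + 1), by omega⟩
    rw [qBinom, qBinom, if_pos (by omega), if_pos (by omega)]
    simp only [show k + 1 + b - k = b + 1 by omega, show k + 1 + b - (k + 1) = b by omega,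
      qPoch_succ, ← pow_succ]
    have := hq k; have := hq b
    have := one_sub_pow_succ_ne_zero hq k; have := one_sub_pow_succ_ne_zero hq b
    field_simp
  · simp [qBinom_of_lt]
  · simp [qBinom_of_lt, h, Nat.lt_succ_of_lt h]

lemma qBinom_succ_succ' (hq : ∀ n, qPoch q q n ≠ 0) (n k : ℕ) :
    qBinom q (n + 1) (k + 1) = q ^ (n - k) * qBinom q n k + qBinom q n (k + 1) := by
  rw [qBinom_succ_succ hq]
  linear_combination -qBinom_succ_right_mul hq n k

lemma sum_range_qBinom_mul (f : ℕ → ℝ) {n N : ℕ} (hN : n < N) :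
    ∑ k ∈ range (n + 1), qBinom q n k * f k = ∑ k ∈ range N, qBinom q n k * f k :=
  sum_subset (range_subset_range.2 hN) fun k _ hk => by
    rw [qBinom_of_lt (by simpa using hk), zero_mul]

lemma qNewton_succ (x : ℝ) (k : ℕ) : qNewton q x (k + 1) = qNewton q x k * (x - q ^ k) :=
  prod_range_succ _ _

theorem pow_eq_sum_qBinom_mul_qNewton (hq : ∀ n, qPoch q q n ≠ 0) (x : ℝ) (n : ℕ) :
    x ^ n = ∑ k ∈ range (n + 1), qBinom q n k * qNewton q x k := by
  induction n with
  | zero => simp [qBinom, qNewton, qPoch_zero]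
  | succ n ih =>
    have hshift : ∑ k ∈ range (n + 1), q ^ k * qBinom q n k * qNewton q x k =
        qNewton q x 0 +
          ∑ k ∈ range (n + 1), q ^ (k + 1) * qBinom q n (k + 1) * qNewton q x (k + 1) := by
      rw [sum_range_succ', sum_range_succ _ n, qBinom_of_lt (Nat.lt_succ_self n),
        qBinom_zero_right hq]
      ring
    calc x ^ (n + 1)
        _ = ∑ k ∈ range (n + 1), qBinom q n k * qNewton q x (k + 1) +
            ∑ k ∈ range (n + 1), q ^ k * qBinom q n k * qNewton q x k := by
          rw [pow_succ, ih, sum_mul, ← sum_add_distrib]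
          exact sum_congr rfl fun k _ => by rw [qNewton_succ]; ring
        _ = _ := by
          rw [hshift, sum_range_succ' _ (n + 1), qBinom_zero_right hq]
          simp only [qBinom_succ_succ hq, add_mul, sum_add_distrib]
          ring

theorem sum_qBinom_mul_qPoch (hq : ∀ n, qPoch q q n ≠ 0) (μ c : ℝ) (n : ℕ) :
    ∑ l ∈ range (n + 1), qBinom q n l * (μ ^ l * qPoch q c l * qPoch q μ (n - l)) =
      qPoch q (c * μ) n := by
  induction n with
  | zero => simp [qBinom, qPoch_zero]
  | succ n ih =>
    set T : ℕ → ℝ := fun l => qBinom q n l * (μ ^ l * qPoch q c l * qPoch q μ (n - l))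
    have hlow : ∑ l ∈ range (n + 1),
          q ^ (n - l) * qBinom q n l * (μ ^ (l + 1) * qPoch q c (l + 1) * qPoch q μ (n - l)) =
        ∑ l ∈ range (n + 1), T l * (q ^ (n - l) * μ * (1 - q ^ l * c)) :=
      sum_congr rfl fun l _ => by simp only [T, qPoch_succ]; ring
    have hhigh : ∑ l ∈ range (n + 1),
          qBinom q n (l + 1) * (μ ^ (l + 1) * qPoch q c (l + 1) * qPoch q μ (n - l)) +
            qPoch q μ (n + 1) =
        ∑ l ∈ range (n + 1), T l * (1 - q ^ (n - l) * μ) := by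
      calc _ = ∑ l ∈ range (n + 1 + 1),
            qBinom q n l * (μ ^ l * qPoch q c l * qPoch q μ (n + 1 - l)) := by
            rw [sum_range_succ' _ (n + 1), qBinom_zero_right hq]
            simp [qPoch_zero]
        _ = ∑ l ∈ range (n + 1),
            qBinom q n l * (μ ^ l * qPoch q c l * qPoch q μ (n + 1 - l)) :=
            (sum_range_qBinom_mul _ (by omega)).symm
        _ = _ := sum_congr rfl fun l hl => by
            rw [show n + 1 - l = n - l + 1 by simp at hl; omega, qPoch_succ]; ring
    have hcombine : ∀ l ∈ range (n + 1), T l * (q ^ (n - l) * μ * (1 - q ^ l * c)) +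
        T l * (1 - q ^ (n - l) * μ) = T l * (1 - q ^ n * (c * μ)) := fun l hl => by
      rw [← pow_sub_mul_pow q (show l ≤ n by simp at hl; omega)]; ring
    rw [sum_range_succ', qBinom_zero_right hq]
    simp only [Nat.add_sub_add_right, qBinom_succ_succ' hq, add_mul, sum_add_distrib, hlow]
    rw [pow_zero, qPoch_zero, Nat.sub_zero, one_mul, one_mul, one_mul, add_assoc, hhigh,
      ← sum_add_distrib, sum_congr rfl hcombine, ← sum_mul, ih, qPoch_succ]

lemma qNewton_pow_of_lt {j k : ℕ} (h : j < k) : qNewton q (q ^ j) k = 0 :=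
  prod_eq_zero (mem_range.2 h) (sub_self _)

lemma qNewton_pow_add (k l : ℕ) :
    qNewton q (q ^ (k + l)) k = (∏ i ∈ range k, -q ^ i) * qPoch q (q ^ (l + 1)) k := by
  rw [qNewton, qPoch, ← prod_range_reflect (fun i => 1 - q ^ i * q ^ (l + 1)) k,
    ← prod_mul_distrib]
  refine prod_congr rfl fun i hi => ?_
  have : q ^ i * (q ^ (k - 1 - i) * q ^ (l + 1)) = q ^ (k + l) := by
    rw [← pow_add, ← pow_add]; congr 1; simp at hi; omega
  rw [← this]; ring

lemma qBinom_add_mul_qPoch (hq : ∀ n, qPoch q q n ≠ 0) {l n : ℕ} (k : ℕ) (hl : l ≤ n) :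
    qBinom q (k + n) (k + l) * qPoch q (q ^ (l + 1)) k =
      qBinom q (k + n) k * qBinom q n l * qPoch q q k := by
  rw [qBinom, qBinom, qBinom, if_pos (by omega), if_pos (by omega), if_pos hl,
    show k + n - (k + l) = n - l by omega, Nat.add_sub_cancel_left]
  have hsplit : qPoch q q (l + k) = qPoch q q l * qPoch q (q ^ (l + 1)) k := by
    rw [qPoch_add, pow_succ]
  have := hq l; have := hq n; have := hq k; have := hq (n - l)
  have := right_ne_zero_of_mul (hsplit ▸ hq (l + k))
  rw [add_comm k l, hsplit]
  field_simp

theorem sum_qBinom_mul_qPoch_mul_qNewton (hq : ∀ n, qPoch q q n ≠ 0) (μ c : ℝ)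
    {m k : ℕ} (hk : k ≤ m) :
    ∑ j ∈ range (m + 1),
        qBinom q m j * (μ ^ j * qPoch q c j * qPoch q μ (m - j)) * qNewton q (q ^ j) k =
      qBinom q m k * qPoch q q k * (∏ i ∈ range k, -q ^ i) * μ ^ k * qPoch q c k *
        qPoch q (q ^ k * c * μ) (m - k) := by
  obtain ⟨n, rfl⟩ : ∃ n, m = k + n := ⟨m - k, by omega⟩
  rw [show k + n + 1 = k + (n + 1) by omega, sum_range_add,
    sum_eq_zero fun j hj => by rw [qNewton_pow_of_lt (mem_range.1 hj), mul_zero], zero_add,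
    Nat.add_sub_cancel_left]
  calc _ = ∑ l ∈ range (n + 1),
        qBinom q (k + n) k * qPoch q q k * (∏ i ∈ range k, -q ^ i) * μ ^ k * qPoch q c k *
          (qBinom q n l * (μ ^ l * qPoch q (q ^ k * c) l * qPoch q μ (n - l))) :=
        sum_congr rfl fun l hl => by
          rw [qNewton_pow_add, Nat.add_sub_add_left, pow_add, qPoch_add q c k l]
          linear_combination (∏ i ∈ range k, -q ^ i) * μ ^ k * μ ^ l * qPoch q c k *
            qPoch q (q ^ k * c) l * qPoch q μ (n - l) *
            qBinom_add_mul_qPoch hq k (by simp at hl; omega : l ≤ n)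
    _ = _ := by rw [← mul_sum, sum_qBinom_mul_qPoch hq]

noncomputable def qHahnMoment (q μ ν : ℝ) (k : ℕ) : ℝ :=
  (∏ i ∈ range k, -q ^ i) * μ ^ k * qPoch q (ν / μ) k * qPoch q q k / qPoch q ν k

lemma qHahnPhi_eq {μ ν : ℝ} {j m : ℕ} (hjm : j ≤ m) :
    qHahnPhi q μ ν j m =
      qBinom q m j * (μ ^ j * qPoch q (ν / μ) j * qPoch q μ (m - j)) / qPoch q ν m := by
  rw [qHahnPhi, qBinom, if_pos hjm]
  ring

theorem sum_qHahnPhi_mul_qNewton {μ ν : ℝ} (hq : ∀ n, qPoch q q n ≠ 0) (hμ : μ ≠ 0)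
    {m : ℕ} (hν : qPoch q ν m ≠ 0) (k : ℕ) :
    ∑ j ∈ range (m + 1), qHahnPhi q μ ν j m * qNewton q (q ^ j) k =
      qBinom q m k * qHahnMoment q μ ν k := by
  rcases lt_or_ge m k with h | h
  · rw [qBinom_of_lt h, zero_mul]
    exact sum_eq_zero fun j hj => by
      rw [qNewton_pow_of_lt (by simp at hj; omega), mul_zero]
  have hsplit : qPoch q ν m = qPoch q ν k * qPoch q (q ^ k * ν) (m - k) := by
    rw [← qPoch_add, Nat.add_sub_cancel' h]
  rw [sum_congr rfl fun j hj => by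
      rw [qHahnPhi_eq (by simp at hj; omega : j ≤ m), div_mul_eq_mul_div],
    ← sum_div, sum_qBinom_mul_qPoch_mul_qNewton hq _ _ h, hsplit, qHahnMoment,
    show q ^ k * (ν / μ) * μ = q ^ k * ν by field_simp,
    mul_div_mul_right _ _ (right_ne_zero_of_mul (hsplit ▸ hν))]
  ring

theorem sum_pow_mul_qHahnPhi {μ ν : ℝ} (hq : ∀ n, qPoch q q n ≠ 0) (hμ : μ ≠ 0)
    {m : ℕ} (hν : qPoch q ν m ≠ 0) {y N : ℕ} (hN : y < N) :
    ∑ j ∈ range (m + 1), q ^ (j * y) * qHahnPhi q μ ν j m =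
      ∑ k ∈ range N, qBinom q y k * (qBinom q m k * qHahnMoment q μ ν k) := by
  simp_rw [← sum_range_qBinom_mul _ hN, ← sum_qHahnPhi_mul_qNewton hq hμ hν, mul_sum]
  rw [sum_comm]
  refine sum_congr rfl fun j _ => ?_
  rw [pow_mul, pow_eq_sum_qBinom_mul_qNewton hq (q ^ j) y, sum_mul]
  exact sum_congr rfl fun k _ => by ring

end

/-- Symmetry property of the q-deformed beta-binomial weights:
`∑_{j=0}^{m} q^{jy} φ_{q,μ,ν}(j|m) = ∑_{k=0}^{y} q^{km} φ_{q,μ,ν}(k|y)`. -/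
theorem qHahnPhi_symmetry (q μ ν : ℝ) (hq0 : 0 < q) (hq1 : q < 1) (hμ : μ ≠ 0)
    (m y : ℕ) (hνm : qPoch q ν m ≠ 0) (hνy : qPoch q ν y ≠ 0) :
    ∑ j ∈ Finset.range (m + 1), q ^ (j * y) * qHahnPhi q μ ν j m =
      ∑ k ∈ Finset.range (y + 1), q ^ (k * m) * qHahnPhi q μ ν k y := by
  have hq : ∀ n, qPoch q q n ≠ 0 := fun n => (qPoch_self_pos hq0 hq1 n).ne'
  rw [sum_pow_mul_qHahnPhi hq hμ hνm (by omega : y < m + y + 1),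
    sum_pow_mul_qHahnPhi hq hμ hνy (by omega : m < m + y + 1)]
  exact sum_congr rfl fun k _ => by ring
end

section
/- As ε → 0+, for 1 ≤ j ≤ m, the weight φ_{q,ν+ε,ν}(j|m) has the expansion φ_{q,ν+ε,ν}(j|m) = ψ_{q,ν}(j|m)·ε + O(ε²), where ψ_{q,ν}(j|m) = ν^{j-1}/(1-q^j) · (q;q)_m (ν;q)_{m-j} / ((q;q)_{m-j} (ν;q)_m); and φ_{q,ν+ε,ν}(0|m) = 1 + O(ε). -/
open Finset Filter Asymptotics

/-- The rate `ψ_{q,ν}(j|m) = ν^{j-1}/(1-q^j) · (q;q)_m (ν;q)_{m-j}/((q;q)_{m-j}(ν;q)_m)`. -/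
noncomputable def qHahnPsi (q ν : ℝ) (j m : ℕ) : ℝ :=
  ν ^ (j - 1) / (1 - q ^ j) * (qPoch q q m * qPoch q ν (m - j)) /
    (qPoch q q (m - j) * qPoch q ν m)

/-!
For `j ≥ 1`, `μ ^ j (ν/μ;q)_j = ∏_{i<j} (μ - q^i ν)` has the factor `μ - ν` (from `i = 0`), so
`φ_{q,μ,ν}(j|m) = (μ - ν) · S(μ)` with `S = qHahnSlope` differentiable in `μ`. Hence
`φ_{q,ν+ε,ν}(j|m) = ε · S(ν + ε) = S(ν) ε + O(ε²)`, and the cancellation of `(q;q)_{j-1}` against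
`(q;q)_j = (q;q)_{j-1} (1 - q^j)` shows `S(ν) = ψ_{q,ν}(j|m)`. For `j = 0` the weight is
`(μ;q)_m / (ν;q)_m`, which is differentiable in `μ` and equals `1` at `μ = ν`.
-/

namespace qPoch

@[simp]
lemma zero (q x : ℝ) : qPoch q x 0 = 1 := by
  simp [qPoch]

lemma self_succ (q : ℝ) (k : ℕ) : qPoch q q (k + 1) = qPoch q q k * (1 - q ^ (k + 1)) := by
  simp only [qPoch, prod_range_succ, ← pow_succ]

lemma pos {q x : ℝ} (hq0 : 0 ≤ q) (hq1 : q ≤ 1) (hx0 : 0 ≤ x) (hx1 : x < 1) (k : ℕ) :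
    0 < qPoch q x k := by
  refine prod_pos fun i _ => ?_
  have : q ^ i * x ≤ x := mul_le_of_le_one_left hx0 (pow_le_one₀ hq0 hq1)
  linarith

lemma pow_mul_div {μ : ℝ} (q ν : ℝ) (hμ : μ ≠ 0) (j : ℕ) :
    μ ^ j * qPoch q (ν / μ) j = ∏ i ∈ range j, (μ - q ^ i * ν) := by
  rw [qPoch, pow_eq_prod_const μ j, ← prod_mul_distrib]
  refine prod_congr rfl fun i _ => ?_
  field_simp

@[fun_prop]
lemma differentiable (q : ℝ) (k : ℕ) : Differentiable ℝ fun x => qPoch q x k := by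
  unfold qPoch
  fun_prop

end qPoch

noncomputable def qHahnSlope (q ν : ℝ) (k m : ℕ) (μ : ℝ) : ℝ :=
  (∏ i ∈ range k, (μ - q ^ (i + 1) * ν)) * qPoch q μ (m - (k + 1)) / qPoch q ν m *
    (qPoch q q m / (qPoch q q (k + 1) * qPoch q q (m - (k + 1))))

section

variable {q ν μ : ℝ} {k m : ℕ}

lemma qHahnPhi_succ_eq_mul_slope (hμ : μ ≠ 0) :
    qHahnPhi q μ ν (k + 1) m = (μ - ν) * qHahnSlope q ν k m μ := by
  rw [qHahnPhi, qHahnSlope, ← mul_assoc (μ ^ _), qPoch.pow_mul_div q ν hμ, prod_range_succ']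
  simp only [pow_zero, one_mul]
  ring

lemma qHahnSlope_self (hq : qPoch q q k ≠ 0) :
    qHahnSlope q ν k m ν = qHahnPsi q ν (k + 1) m := by
  have hprod : ∏ i ∈ range k, (ν - q ^ (i + 1) * ν) = ν ^ k * qPoch q q k := by
    rw [qPoch, pow_eq_prod_const ν k, ← prod_mul_distrib]
    exact prod_congr rfl fun i _ => by ring
  rw [qHahnSlope, hprod, qPoch.self_succ, qHahnPsi, Nat.add_sub_cancel]
  field_simp

lemma differentiable_qHahnSlope (q ν : ℝ) (k m : ℕ) : Differentiable ℝ (qHahnSlope q ν k m) := by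
  unfold qHahnSlope
  fun_prop

lemma qHahnPhi_zero_left (hq : qPoch q q m ≠ 0) :
    qHahnPhi q μ ν 0 m = qPoch q μ m / qPoch q ν m := by
  simp [qHahnPhi, hq]

end

lemma isBigO_mul_sub_of_differentiableAt {G : ℝ → ℝ} (hG : DifferentiableAt ℝ G 0) :
    (fun ε => ε * G ε - G 0 * ε) =O[nhds 0] fun ε => ε ^ 2 := by
  have hG' : (fun ε => G ε - G 0) =O[nhds 0] fun ε => ε := by
    simpa only [sub_zero] using hG.isBigO_sub
  exact ((isBigO_refl (fun ε : ℝ => ε) _).mul hG').congr (fun ε => by ring) (fun ε => by ring)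

theorem qHahnPhi_expansion_mu_near_nu_general (q ν : ℝ) (hq0 : 0 < q) (hq1 : q < 1)
    (hν0 : 0 ≤ ν) (hν1 : ν < 1) (m : ℕ) :
    (∀ j : ℕ, 1 ≤ j → j ≤ m →
      (fun ε : ℝ => qHahnPhi q (ν + ε) ν j m - qHahnPsi q ν j m * ε)
        =O[nhdsWithin 0 (Set.Ioi 0)] fun ε : ℝ => ε ^ 2) ∧
    ((fun ε : ℝ => qHahnPhi q (ν + ε) ν 0 m - 1)
        =O[nhdsWithin 0 (Set.Ioi 0)] fun ε : ℝ => ε) := by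
  have hqq : ∀ k, qPoch q q k ≠ 0 := fun k => (qPoch.pos hq0.le hq1.le hq0.le hq1 k).ne'
  have hqν : qPoch q ν m ≠ 0 := (qPoch.pos hq0.le hq1.le hν0 hν1 m).ne'
  constructor
  · rintro (_ | k) hj -
    · omega
    have hS : DifferentiableAt ℝ (fun ε => qHahnSlope q ν k m (ν + ε)) 0 :=
      (differentiable_qHahnSlope q ν k m).differentiableAt.comp 0 (by fun_prop)
    refine EventuallyEq.trans_isBigO ?_
      ((isBigO_mul_sub_of_differentiableAt hS).mono nhdsWithin_le_nhds)
    filter_upwards [self_mem_nhdsWithin] with ε (hε : 0 < ε)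
    rw [qHahnPhi_succ_eq_mul_slope (by positivity), add_zero, qHahnSlope_self (hqq k),
      add_sub_cancel_left]
  · have hH : DifferentiableAt ℝ (fun ε => qPoch q (ν + ε) m / qPoch q ν m) 0 := by fun_prop
    simpa only [qHahnPhi_zero_left (hqq m), add_zero, div_self hqν, sub_zero] using
      hH.isBigO_sub.mono nhdsWithin_le_nhds

/-- As `ε → 0+`: `φ_{q,ν+ε,ν}(j|m) = ψ_{q,ν}(j|m)·ε + O(ε²)` for `1 ≤ j ≤ m`, and
`φ_{q,ν+ε,ν}(0|m) = 1 + O(ε)`. -/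
theorem qHahnPhi_expansion_mu_near_nu (q ν : ℝ) (hq0 : 0 < q) (hq1 : q < 1)
    (hν0 : 0 ≤ ν) (hν1 : ν < 1) (m : ℕ) (hm : 1 ≤ m) :
    (∀ j : ℕ, 1 ≤ j → j ≤ m →
      (fun ε : ℝ => qHahnPhi q (ν + ε) ν j m - qHahnPsi q ν j m * ε)
        =O[nhdsWithin 0 (Set.Ioi 0)] fun ε : ℝ => ε ^ 2) ∧
    ((fun ε : ℝ => qHahnPhi q (ν + ε) ν 0 m - 1)
        =O[nhdsWithin 0 (Set.Ioi 0)] fun ε : ℝ => ε) :=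
  qHahnPhi_expansion_mu_near_nu_general q ν hq0 hq1 hν0 hν1 m
end

section
/- Let B_ε ~ Beta(εα, εβ) for α, β > 0. Then as ε → 0+, the pair (−ε log B_ε, −ε log(1−B_ε)) converges in distribution to (ξ E_α, (1−ξ) E_β), where ξ is Bernoulli with P(ξ=1) = β/(α+β), and E_α, E_β are exponential random variables with rates α and β respectively, independent of ξ. -/
/-!
Split the Beta(εα, εβ) integral at `1/2` and reflect the upper half by `x ↦ 1 - x` (which swaps
`α, β` and the two coordinates). Writing `(a, b)` for `(α, β)` or `(β, α)`, on `(0, 1/2)`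
substitute `x = exp (-u/ε)`: then `ε x^{εa-1} (1-x)^{εb-1} dx` becomes
`e^{-au} (1 - e^{-u/ε})^{εb-1} du` on `u > ε log 2`, where the middle factor is at most `2` and
tends to `1`, while `-ε log (1 - x) → 0`. By dominated convergence `ε` times each half tends to
`∫₀^∞ e^{-au} f(u, 0) du`. Finally `1 / (ε B(εα, εβ)) → αβ/(α+β)` because
`s Γ(s) = Γ(s+1) → 1` as `s → 0`, and `αβ/(α+β) · ∫₀^∞ e^{-αu} g = β/(α+β) · E[g(E_α)]`.
-/

open MeasureTheory ProbabilityTheory Filter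

noncomputable def betaMeasure (a b : ℝ) : Measure ℝ :=
  volume.withDensity fun x =>
    ENNReal.ofReal
      (if x ∈ Set.Ioo (0 : ℝ) 1 then
        Real.Gamma (a + b) / (Real.Gamma a * Real.Gamma b) * x ^ (a - 1) * (1 - x) ^ (b - 1)
      else 0)

open Real Set Topology
open scoped BoundedContinuousFunction

theorem integral_withDensity_ofReal_ite {X : Type*} [MeasurableSpace X] {μ : Measure X}
    {s : Set X} [DecidablePred (· ∈ s)] (hs : MeasurableSet s) {ρ : X → ℝ} (hρ : Measurable ρ)
    (hρ_nonneg : ∀ x ∈ s, 0 ≤ ρ x) (g : X → ℝ) :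
    ∫ x, g x ∂μ.withDensity (fun x => ENNReal.ofReal (if x ∈ s then ρ x else 0)) =
      ∫ x in s, ρ x * g x ∂μ := by
  rw [integral_withDensity_eq_integral_toReal_smul (Measurable.ennreal_ofReal
    (hρ.ite hs measurable_const : Measurable fun x => if x ∈ s then ρ x else 0))
    (ae_of_all _ fun _ => ENNReal.ofReal_lt_top), ← integral_indicator hs]
  congr 1 with x
  by_cases hx : x ∈ s
  · simp [hx, ENNReal.toReal_ofReal (hρ_nonneg x hx)]
  · simp [hx]

theorem integral_expMeasure {r : ℝ} (hr : 0 ≤ r) (g : ℝ → ℝ) :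
    ∫ x, g x ∂expMeasure r = r * ∫ x in Ioi 0, exp (-(r * x)) * g x := by
  have hdensity : expMeasure r = volume.withDensity fun x =>
      ENNReal.ofReal (if x ∈ Ici 0 then r * exp (-(r * x)) else 0) :=
    congrArg volume.withDensity (funext fun x => exponentialPDF_eq r x)
  rw [hdensity, integral_withDensity_ofReal_ite measurableSet_Ici (by fun_prop)
    (fun x _ => by positivity), integral_Ici_eq_integral_Ioi, ← integral_const_mul]
  refine setIntegral_congr_fun measurableSet_Ioi fun x _ => ?_
  ring

theorem integral_betaMeasure {p q : ℝ} (hp : 0 < p) (hq : 0 < q) (g : ℝ → ℝ) :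
    ∫ x, g x ∂_root_.betaMeasure p q =
      (beta p q)⁻¹ * ∫ x in Ioo 0 1, x ^ (p - 1) * (1 - x) ^ (q - 1) * g x := by
  have hC : (beta p q)⁻¹ = Gamma (p + q) / (Gamma p * Gamma q) := by rw [beta, inv_div]
  rw [_root_.betaMeasure, ← integral_const_mul, hC,
    integral_withDensity_ofReal_ite measurableSet_Ioo (by fun_prop) fun x hx => by
      rw [← hC]
      exact mul_nonneg (mul_nonneg (inv_nonneg.2 (beta_pos hp hq).le) (rpow_nonneg hx.1.le _))
        (rpow_nonneg (sub_nonneg.2 hx.2.le) _)]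
  simp only [← hC, mul_assoc]

theorem integral_Ioo_zero_one_eq_add_integral_one_sub {h : ℝ → ℝ}
    (h₁ : IntegrableOn h (Ioo 0 (1 / 2)))
    (h₂ : IntegrableOn (fun x => h (1 - x)) (Ioo 0 (1 / 2))) :
    ∫ x in Ioo 0 1, h x = (∫ x in Ioo 0 (1 / 2), h x) + ∫ x in Ioo 0 (1 / 2), h (1 - x) := by
  have hinterval : ∀ {g : ℝ → ℝ}, IntegrableOn g (Ioo 0 (1 / 2)) →
      IntervalIntegrable g volume 0 (1 / 2) :=
    fun hg => (intervalIntegrable_iff_integrableOn_Ioo_of_le (by norm_num)).2 hg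
  have hIoo : ∀ {b : ℝ} (g : ℝ → ℝ), 0 ≤ b → ∫ x in Ioo 0 b, g x = ∫ x in 0..b, g x :=
    fun g hb => by rw [intervalIntegral.integral_of_le hb, integral_Ioc_eq_integral_Ioo]
  have hupper : IntervalIntegrable h volume (1 / 2) 1 := by
    have := ((hinterval h₂).comp_sub_left 1).symm
    norm_num at this
    exact this
  rw [hIoo _ zero_le_one, hIoo _ (by norm_num), hIoo _ (by norm_num),
    intervalIntegral.integral_comp_sub_left]
  norm_num
  exact (intervalIntegral.integral_add_adjacent_intervals (hinterval h₁) hupper).symm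

theorem rpow_le_two_of_one_half_le {t p : ℝ} (ht : 1 / 2 ≤ t) (ht' : t ≤ 1) (hp : -1 ≤ p) :
    t ^ p ≤ 2 := by
  rcases le_or_gt 0 p with hp0 | hp0
  · exact (rpow_le_one (by linarith) ht' hp0).trans one_le_two
  · calc t ^ p ≤ (1 / 2 : ℝ) ^ p := rpow_le_rpow_of_nonpos (by norm_num) ht hp0.le
      _ = 2 ^ (-p) := by rw [one_div, inv_rpow zero_le_two, rpow_neg zero_le_two]
      _ ≤ 2 ^ (1 : ℝ) := rpow_le_rpow_of_exponent_le one_le_two (by linarith)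
      _ = 2 := rpow_one 2

noncomputable def logIntegrand (p q ε : ℝ) (F : ℝ × ℝ → ℝ) (x : ℝ) : ℝ :=
  x ^ (p - 1) * (1 - x) ^ (q - 1) * F (-ε * log x, -ε * log (1 - x))

theorem logIntegrand_one_sub (p q ε : ℝ) (F : ℝ × ℝ → ℝ) (x : ℝ) :
    logIntegrand p q ε F (1 - x) = logIntegrand q p ε (F ∘ Prod.swap) x := by
  simp only [logIntegrand, sub_sub_cancel, Function.comp_apply, Prod.swap_prod_mk]
  ring

theorem integrableOn_logIntegrand {p q : ℝ} (hp : 0 < p) (hq : 0 ≤ q) (ε : ℝ)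
    (F : ℝ × ℝ →ᵇ ℝ) : IntegrableOn (logIntegrand p q ε F) (Ioo 0 (1 / 2)) := by
  have hmeas : Measurable (logIntegrand p q ε F) := by
    unfold logIntegrand
    have := F.continuous.measurable
    fun_prop
  have hdom : IntegrableOn (fun x : ℝ => x ^ (p - 1) * (2 * ‖F‖)) (Ioo 0 (1 / 2)) :=
    ((intervalIntegral.intervalIntegrable_rpow' (a := 0) (b := 1 / 2) (by linarith)).1.mono_set
      Ioo_subset_Ioc_self).mul_const _
  refine hdom.mono' hmeas.aestronglyMeasurable <| (ae_restrict_iff' measurableSet_Ioo).2 <|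
    ae_of_all _ fun x ⟨hx0, hx⟩ => ?_
  have h1x : (1 - x) ^ (q - 1) ≤ 2 :=
    rpow_le_two_of_one_half_le (by linarith) (by linarith) (by linarith)
  rw [logIntegrand, norm_mul, norm_mul, norm_of_nonneg (rpow_nonneg hx0.le _),
    norm_of_nonneg (rpow_nonneg (by linarith) _), mul_assoc]
  gcongr
  exact F.norm_coe_le_norm _

theorem integral_betaMeasure_log {p q : ℝ} (hp : 0 < p) (hq : 0 < q) (ε : ℝ) (F : ℝ × ℝ →ᵇ ℝ) :
    ∫ x, F (-ε * log x, -ε * log (1 - x)) ∂_root_.betaMeasure p q =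
      (beta p q)⁻¹ * ((∫ x in Ioo 0 (1 / 2), logIntegrand p q ε F x) +
        ∫ x in Ioo 0 (1 / 2), logIntegrand q p ε (F.compContinuous ContinuousMap.prodSwap) x) := by
  have hreflected : IntegrableOn (fun x => logIntegrand p q ε F (1 - x)) (Ioo 0 (1 / 2)) := by
    simp_rw [logIntegrand_one_sub]
    exact integrableOn_logIntegrand hq hp.le ε (F.compContinuous ContinuousMap.prodSwap)
  calc ∫ x, F (-ε * log x, -ε * log (1 - x)) ∂_root_.betaMeasure p q
      = (beta p q)⁻¹ * ∫ x in Ioo 0 1, logIntegrand p q ε F x := integral_betaMeasure hp hq _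
    _ = _ := by
      rw [integral_Ioo_zero_one_eq_add_integral_one_sub (integrableOn_logIntegrand hp hq.le ε F)
        hreflected]
      simp_rw [logIntegrand_one_sub]
      rfl

theorem exp_neg_div_lt_half_iff {ε u : ℝ} (hε : 0 < ε) :
    exp (-(u / ε)) < 1 / 2 ↔ ε * log 2 < u := by
  rw [one_div, ← exp_log (inv_pos.2 two_pos), log_inv, exp_lt_exp, neg_lt_neg_iff,
    lt_div_iff₀ hε, mul_comm]

theorem image_exp_neg_div_Ioi {ε : ℝ} (hε : 0 < ε) :
    (fun u => exp (-(u / ε))) '' Ioi (ε * log 2) = Ioo 0 (1 / 2) := by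
  ext x
  constructor
  · rintro ⟨u, hu, rfl⟩
    exact ⟨exp_pos _, (exp_neg_div_lt_half_iff hε).2 hu⟩
  · rintro ⟨hx0, hx⟩
    have hu : exp (-(-ε * log x / ε)) = x := by
      rw [neg_mul, neg_div, neg_neg, mul_div_cancel_left₀ _ hε.ne', exp_log hx0]
    exact ⟨-ε * log x, (exp_neg_div_lt_half_iff hε).1 (by rwa [hu]), hu⟩

theorem mul_integral_Ioo_zero_half_eq {ε : ℝ} (hε : 0 < ε) (g : ℝ → ℝ) :
    ε * ∫ x in Ioo 0 (1 / 2), g x =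
      ∫ u in Ioi (ε * log 2), exp (-(u / ε)) * g (exp (-(u / ε))) := by
  have hderiv : ∀ u ∈ Ioi (ε * log 2), HasDerivWithinAt (fun u => exp (-(u / ε)))
      (exp (-(u / ε)) * -(1 / ε)) (Ioi (ε * log 2)) u :=
    fun u _ => ((hasDerivAt_id u).div_const ε).neg.exp.hasDerivWithinAt
  have hinj : InjOn (fun u => exp (-(u / ε))) (Ioi (ε * log 2)) :=
    fun u _ v _ h => by simpa [hε.ne'] using h
  rw [← image_exp_neg_div_Ioi hε, integral_image_eq_integral_abs_deriv_smul measurableSet_Ioi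
    hderiv hinj, ← integral_const_mul]
  congr 1 with u
  rw [abs_mul, abs_neg, abs_of_pos (exp_pos _), abs_of_pos (by positivity), smul_eq_mul]
  field_simp

noncomputable def logIntegrandSubst (a b ε : ℝ) (F : ℝ × ℝ → ℝ) (u : ℝ) : ℝ :=
  exp (-(a * u)) * (1 - exp (-(u / ε))) ^ (ε * b - 1) * F (u, -ε * log (1 - exp (-(u / ε))))

theorem exp_mul_logIntegrand_exp {ε : ℝ} (hε : ε ≠ 0) (a b : ℝ) (F : ℝ × ℝ → ℝ) (u : ℝ) :
    exp (-(u / ε)) * logIntegrand (ε * a) (ε * b) ε F (exp (-(u / ε))) =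
      logIntegrandSubst a b ε F u := by
  have hpow : exp (-(u / ε)) * exp (-(u / ε)) ^ (ε * a - 1) = exp (-(a * u)) := by
    rw [rpow_sub_one (exp_pos _).ne', mul_div_cancel₀ _ (exp_pos _).ne', ← exp_mul]
    congr 1
    field_simp
  rw [logIntegrand, log_exp, ← mul_assoc, ← mul_assoc, hpow, logIntegrandSubst]
  congr 3
  field_simp

theorem tendsto_logIntegrandSubst (a b : ℝ) {F : ℝ × ℝ → ℝ} (hF : Continuous F) {u : ℝ}
    (hu : 0 < u) :
    Tendsto (fun ε => logIntegrandSubst a b ε F u) (𝓝[>] 0) (𝓝 (exp (-(a * u)) * F (u, 0))) := by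
  have hε : Tendsto (fun ε : ℝ => ε) (𝓝[>] 0) (𝓝 0) := nhdsWithin_le_nhds
  have hexp : Tendsto (fun ε => exp (-(u / ε))) (𝓝[>] 0) (𝓝 0) :=
    tendsto_exp_neg_atTop_nhds_zero.comp <|
      (tendsto_inv_nhdsGT_zero.const_mul_atTop hu).congr fun ε => (div_eq_mul_inv u ε).symm
  have hone : Tendsto (fun ε => 1 - exp (-(u / ε))) (𝓝[>] 0) (𝓝 1) := by
    simpa using hexp.const_sub 1
  have hpow := hone.rpow ((hε.mul_const b).sub_const 1) (Or.inl one_ne_zero)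
  have hlog : Tendsto (fun ε => -ε * log (1 - exp (-(u / ε)))) (𝓝[>] 0) (𝓝 0) := by
    simpa using hε.neg.mul (hone.log one_ne_zero)
  have hF := (hF.tendsto (u, 0)).comp (tendsto_const_nhds.prodMk_nhds hlog)
  simpa [logIntegrandSubst, Function.comp_def] using (tendsto_const_nhds.mul hpow).mul hF

theorem norm_logIntegrandSubst_le {a b ε u : ℝ} (hb : 0 ≤ b) (hε : 0 < ε) (hu : ε * log 2 < u)
    (F : ℝ × ℝ →ᵇ ℝ) : ‖logIntegrandSubst a b ε F u‖ ≤ 2 * ‖F‖ * exp (-(a * u)) := by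
  have hhalf := (exp_neg_div_lt_half_iff hε).2 hu
  have hpow : (1 - exp (-(u / ε))) ^ (ε * b - 1) ≤ 2 :=
    rpow_le_two_of_one_half_le (by linarith) (by linarith [exp_pos (-(u / ε))]) (by nlinarith)
  rw [logIntegrandSubst, norm_mul, norm_mul, norm_of_nonneg (exp_pos _).le,
    norm_of_nonneg (rpow_nonneg (by linarith) _)]
  calc exp (-(a * u)) * (1 - exp (-(u / ε))) ^ (ε * b - 1) *
        ‖F (u, -ε * log (1 - exp (-(u / ε))))‖
      ≤ exp (-(a * u)) * 2 * ‖F‖ := by gcongr; exact F.norm_coe_le_norm _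
    _ = 2 * ‖F‖ * exp (-(a * u)) := by ring

theorem tendsto_setIntegral_logIntegrandSubst {a b : ℝ} (ha : 0 < a) (hb : 0 ≤ b)
    (F : ℝ × ℝ →ᵇ ℝ) :
    Tendsto (fun ε => ∫ u in Ioi (ε * log 2), logIntegrandSubst a b ε F u) (𝓝[>] 0)
      (𝓝 (∫ u in Ioi 0, exp (-(a * u)) * F (u, 0))) := by
  have hindicator : ∀ ε, 0 < ε → ∫ u in Ioi (ε * log 2), logIntegrandSubst a b ε F u =
      ∫ u in Ioi 0, (Ioi (ε * log 2)).indicator (logIntegrandSubst a b ε F) u := fun ε hε => by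
    rw [setIntegral_indicator measurableSet_Ioi, inter_eq_right.2 (Ioi_subset_Ioi (by positivity))]
  refine Tendsto.congr' (eventually_nhdsWithin_of_forall fun ε hε => (hindicator ε hε).symm) ?_
  refine tendsto_integral_filter_of_dominated_convergence (fun u => 2 * ‖F‖ * exp (-(a * u)))
    ?_ ?_ ?_ ?_
  · refine Eventually.of_forall fun ε =>
      (Measurable.indicator ?_ measurableSet_Ioi).aestronglyMeasurable
    unfold logIntegrandSubst
    have := F.continuous.measurable
    fun_prop
  · filter_upwards [self_mem_nhdsWithin] with ε (hε : 0 < ε)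
    refine ae_of_all _ fun u => ?_
    rw [norm_indicator_eq_indicator_norm]
    exact indicator_le' (fun u hu => norm_logIntegrandSubst_le hb hε hu F)
      (fun _ _ => by positivity) u
  · simpa [neg_mul] using (exp_neg_integrableOn_Ioi 0 ha).const_mul (2 * ‖F‖)
  · refine (ae_restrict_iff' measurableSet_Ioi).2 (ae_of_all _ fun u (hu : 0 < u) => ?_)
    have hsmall : ∀ᶠ ε in 𝓝[>] (0 : ℝ), ε * log 2 < u :=
      nhdsWithin_le_nhds <| (continuous_mul_const (log 2)).tendsto' 0 0 (zero_mul _)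
        |>.eventually (gt_mem_nhds hu)
    refine (tendsto_logIntegrandSubst a b F.continuous hu).congr' ?_
    filter_upwards [hsmall] with ε hε
    exact (indicator_of_mem hε _).symm

theorem tendsto_mul_integral_logIntegrand {a b : ℝ} (ha : 0 < a) (hb : 0 ≤ b)
    (F : ℝ × ℝ →ᵇ ℝ) :
    Tendsto (fun ε => ε * ∫ x in Ioo 0 (1 / 2), logIntegrand (ε * a) (ε * b) ε F x) (𝓝[>] 0)
      (𝓝 (∫ u in Ioi 0, exp (-(a * u)) * F (u, 0))) := by
  refine (tendsto_setIntegral_logIntegrandSubst ha hb F).congr' <|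
    eventually_nhdsWithin_of_forall fun ε (hε : 0 < ε) => ?_
  simp_rw [mul_integral_Ioo_zero_half_eq hε, exp_mul_logIntegrand_exp hε.ne']

theorem tendsto_Gamma_mul_add_one (c : ℝ) :
    Tendsto (fun ε : ℝ => Gamma (ε * c + 1)) (𝓝 0) (𝓝 1) := by
  have hΓ : ContinuousAt Gamma 1 := (differentiableAt_Gamma fun m h => by
    linarith [(Nat.cast_nonneg m : (0 : ℝ) ≤ m)]).continuousAt
  simpa [Function.comp_def] using
    hΓ.tendsto.comp ((by fun_prop : Continuous fun ε : ℝ => ε * c + 1).tendsto' 0 1 (by simp))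

theorem tendsto_mul_beta_mul {a b : ℝ} (ha : 0 < a) (hb : 0 < b) :
    Tendsto (fun ε => ε * beta (ε * a) (ε * b)) (𝓝[>] 0) (𝓝 ((a + b) / (a * b))) := by
  have hlim : Tendsto (fun ε => Gamma (ε * a + 1) * Gamma (ε * b + 1) / Gamma (ε * (a + b) + 1) *
      ((a + b) / (a * b))) (𝓝 0) (𝓝 ((a + b) / (a * b))) := by
    simpa using ((tendsto_Gamma_mul_add_one a).mul (tendsto_Gamma_mul_add_one b)).div
      (tendsto_Gamma_mul_add_one (a + b)) one_ne_zero |>.mul_const ((a + b) / (a * b))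
  refine (hlim.mono_left nhdsWithin_le_nhds).congr' ?_
  filter_upwards [self_mem_nhdsWithin] with ε (hε : 0 < ε)
  have hεa : 0 < ε * a := by positivity
  have hεb : 0 < ε * b := by positivity
  rw [beta, Gamma_add_one hεa.ne', Gamma_add_one hεb.ne', mul_add,
    Gamma_add_one (by positivity), ← mul_add]
  have := (Gamma_pos_of_pos hεa).ne'
  have := (Gamma_pos_of_pos hεb).ne'
  have := (Gamma_pos_of_pos (add_pos hεa hεb)).ne'
  field_simp

/-- If `B_ε ~ Beta(εα, εβ)`, then as `ε → 0+` the pair `(-ε log B_ε, -ε log(1-B_ε))`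
converges in distribution to `(ξ E_α, (1-ξ) E_β)`, where `ξ` is Bernoulli with
`P(ξ=1) = β/(α+β)` and `E_α, E_β` are exponential with rates `α, β`, independent of `ξ`;
equivalently, for every bounded continuous test function `f`, the expectations converge to
`β/(α+β) · E[f(E_α, 0)] + α/(α+β) · E[f(0, E_β)]`. -/
theorem beta_to_exponential_zero_temperature (α β : ℝ) (hα : 0 < α) (hβ : 0 < β)
    (f : BoundedContinuousFunction (ℝ × ℝ) ℝ) :
    Tendsto
      (fun ε : ℝ =>
        ∫ x, f (-ε * Real.log x, -ε * Real.log (1 - x)) ∂(_root_.betaMeasure (ε * α) (ε * β)))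
      (nhdsWithin 0 (Set.Ioi 0))
      (nhds
        (β / (α + β) * ∫ e, f (e, 0) ∂(expMeasure α) +
          α / (α + β) * ∫ e, f (0, e) ∂(expMeasure β))) := by
  set g := f.compContinuous ContinuousMap.prodSwap
  have hsplit : ∀ᶠ ε in 𝓝[>] 0,
      (ε * beta (ε * α) (ε * β))⁻¹ *
        (ε * (∫ x in Ioo 0 (1 / 2), logIntegrand (ε * α) (ε * β) ε f x) +
          ε * ∫ x in Ioo 0 (1 / 2), logIntegrand (ε * β) (ε * α) ε g x) =
      ∫ x, f (-ε * log x, -ε * log (1 - x)) ∂_root_.betaMeasure (ε * α) (ε * β) :=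
    eventually_nhdsWithin_of_forall fun ε (hε : 0 < ε) => by
      rw [integral_betaMeasure_log (by positivity) (by positivity)]
      field_simp
      rfl
  have hlim := ((tendsto_mul_beta_mul hα hβ).inv₀ (by positivity)).mul
    ((tendsto_mul_integral_logIntegrand hα hβ.le f).add
      (tendsto_mul_integral_logIntegrand hβ hα.le g))
  rw [integral_expMeasure hα.le, integral_expMeasure hβ.le]
  convert hlim.congr' hsplit using 2
  field_simp
  rfl
end

section
/- For the birth-death chain on ℤ≥0 with absorbing state 0 and rates rate(k → k−1) = 1−q, rate(k → k+1) = k/t for k ≥ 1, the space of bounded functions h: ℤ≥0 → ℝ satisfying h(0) = 0, the harmonicity condition (1−q)h(n−1) + (n/t)h(n+1) = (1−q + n/t)h(n) for all n ≥ 1, and the normalization lim_{n→∞} h(n) = 1, contains at most one element. -/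
/-!
The difference `g` of two such functions is again harmonic, vanishes at `0` and tends to `0`.
Harmonicity says `(n / t) (g (n+1) - g n) = (1 - q) (g n - g (n-1))`, so the increments of `g` are
`g 1 · cᵏ / k!` with `c = (1 - q) t ≥ 0`, and `g n = g 1 · ∑_{k<n} cᵏ / k!`. The partial sums are at
least `1`, so `|g 1| ≤ |g n| → 0` and `g = 0`.
-/

open Filter Topology Finset Nat

/-- Harmonicity for the birth-death chain on `ℕ` jumping `n → n - 1` at rate `a` and
`n → n + 1` at rate `n / t`. -/
def IsBirthDeathHarmonic (a t : ℝ) (h : ℕ → ℝ) : Prop :=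
  ∀ n : ℕ, 1 ≤ n → a * h (n - 1) + ((n : ℝ) / t) * h (n + 1) = (a + (n : ℝ) / t) * h n

namespace IsBirthDeathHarmonic

variable {a t : ℝ} {h : ℕ → ℝ}

theorem sub {h' : ℕ → ℝ} (hh : IsBirthDeathHarmonic a t h) (hh' : IsBirthDeathHarmonic a t h') :
    IsBirthDeathHarmonic a t (h - h') := by
  intro n hn
  simp only [Pi.sub_apply]
  linear_combination hh n hn - hh' n hn

theorem increment_succ (hh : IsBirthDeathHarmonic a t h) (ht : t ≠ 0) (n : ℕ) :
    h (n + 2) - h (n + 1) = a * t / (n + 1) * (h (n + 1) - h n) := by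
  have e := hh (n + 1) (by omega)
  simp only [Nat.add_sub_cancel, Nat.cast_add, Nat.cast_one] at e
  field_simp at e ⊢
  linear_combination e

theorem increment_eq (hh : IsBirthDeathHarmonic a t h) (ht : t ≠ 0) (n : ℕ) :
    h (n + 1) - h n = (h 1 - h 0) * (a * t) ^ n / n ! := by
  induction n with
  | zero => simp
  | succ n ih =>
    rw [hh.increment_succ ht, ih, Nat.factorial_succ]
    push_cast
    field_simp
    ring

theorem eq_add_mul_sum (hh : IsBirthDeathHarmonic a t h) (ht : t ≠ 0) (n : ℕ) :
    h n = h 0 + (h 1 - h 0) * ∑ k ∈ range n, (a * t) ^ k / k ! := by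
  induction n with
  | zero => simp
  | succ n ih =>
    rw [sum_range_succ, mul_add, ← mul_div_assoc, ← hh.increment_eq ht, ← add_assoc, ← ih]
    ring

theorem eq_zero_of_tendsto_zero (hh : IsBirthDeathHarmonic a t h) (ha : 0 ≤ a) (ht : 0 < t)
    (h0 : h 0 = 0) (hlim : Tendsto h atTop (𝓝 0)) : h = 0 := by
  have hsum (n : ℕ) : h n = h 1 * ∑ k ∈ range n, (a * t) ^ k / k ! := by
    simpa [h0] using hh.eq_add_mul_sum ht.ne' n
  have hle : ∀ᶠ n in atTop, |h 1| ≤ |h n| := by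
    filter_upwards [eventually_ge_atTop 1] with n hn
    have hS : 1 ≤ ∑ k ∈ range n, (a * t) ^ k / k ! := by
      simpa using single_le_sum (f := fun k => (a * t) ^ k / k !)
        (fun k _ => by positivity) (mem_range.mpr hn)
    rw [hsum n, abs_mul, abs_of_nonneg (zero_le_one.trans hS)]
    exact le_mul_of_one_le_right (abs_nonneg _) hS
  have h1 : h 1 = 0 := abs_nonpos_iff.mp (ge_of_tendsto (by simpa using hlim.abs) hle)
  funext n
  simp [hsum n, h1]

end IsBirthDeathHarmonic

theorem transient_qBoson_harmonic_unique_general (q t : ℝ) (hq1 : q < 1)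
    (ht : 0 < t) (h₁ h₂ : ℕ → ℝ)
    (h0₁ : h₁ 0 = 0) (h0₂ : h₂ 0 = 0)
    (harm₁ : ∀ n : ℕ, 1 ≤ n →
      (1 - q) * h₁ (n - 1) + ((n : ℝ) / t) * h₁ (n + 1) = (1 - q + (n : ℝ) / t) * h₁ n)
    (harm₂ : ∀ n : ℕ, 1 ≤ n →
      (1 - q) * h₂ (n - 1) + ((n : ℝ) / t) * h₂ (n + 1) = (1 - q + (n : ℝ) / t) * h₂ n)
    (hlim₁ : Tendsto h₁ atTop (nhds 1)) (hlim₂ : Tendsto h₂ atTop (nhds 1)) :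
    h₁ = h₂ := by
  have hdiff : IsBirthDeathHarmonic (1 - q) t (h₁ - h₂) :=
    IsBirthDeathHarmonic.sub (a := 1 - q) harm₁ harm₂
  have hzero := hdiff.eq_zero_of_tendsto_zero (by linarith) ht (by simp [h0₁, h0₂])
    (sub_self (1 : ℝ) ▸ hlim₁.sub hlim₂)
  exact sub_eq_zero.mp hzero

/-- For the birth-death chain on `ℤ≥0` with absorbing state `0` and rates
`rate(k → k-1) = 1-q`, `rate(k → k+1) = k/t` for `k ≥ 1`, there is at most one bounded
function `h : ℕ → ℝ` with `h 0 = 0`, harmonic for the chain, and with `h n → 1`. -/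
theorem transient_qBoson_harmonic_unique (q t : ℝ) (hq0 : 0 < q) (hq1 : q < 1)
    (ht : 0 < t) (h₁ h₂ : ℕ → ℝ)
    (hb₁ : ∃ C : ℝ, ∀ n : ℕ, |h₁ n| ≤ C) (hb₂ : ∃ C : ℝ, ∀ n : ℕ, |h₂ n| ≤ C)
    (h0₁ : h₁ 0 = 0) (h0₂ : h₂ 0 = 0)
    (harm₁ : ∀ n : ℕ, 1 ≤ n →
      (1 - q) * h₁ (n - 1) + ((n : ℝ) / t) * h₁ (n + 1) = (1 - q + (n : ℝ) / t) * h₁ n)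
    (harm₂ : ∀ n : ℕ, 1 ≤ n →
      (1 - q) * h₂ (n - 1) + ((n : ℝ) / t) * h₂ (n + 1) = (1 - q + (n : ℝ) / t) * h₂ n)
    (hlim₁ : Tendsto h₁ atTop (nhds 1)) (hlim₂ : Tendsto h₂ atTop (nhds 1)) :
    h₁ = h₂ :=
  transient_qBoson_harmonic_unique_general q t hq1 ht h₁ h₂ h0₁ h0₂ harm₁ harm₂ hlim₁ hlim₂
end
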